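/- Let λ be a real number and x a nonzero real number. For every integer k ≥ 0, the trace of the (k+1)-st power of the 2×2 matrix product [[1, 0], [λ/x, 1]] · [[0, x], [−1/x, 0]] equals T_{k+1}(λ), the (k+1)-st normalized Chebyshev polynomial of the first kind evaluated at λ. -/

import Mathlib

/-!
The product matrix `M` has trace `λ` and determinant `1`, so by Cayley–Hamilton `M² = λ M - 1`.
Multiplying by `M ^ n` and taking traces shows that `n ↦ tr (M ^ n)` satisfies the Chebyshev
recurrence, with initial values `tr 1 = 2` and `tr M = λ`.
-/

/-- Normalized Chebyshev polynomials of the first kind: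
`T_0(x) = 2`, `T_1(x) = x`, `T_ℓ(x) = x·T_{ℓ-1}(x) - T_{ℓ-2}(x)` for `ℓ ≥ 2`. -/
noncomputable def chebT (x : ℝ) : ℕ → ℝ
  | 0 => 2
  | 1 => x
  | (n + 2) => x * chebT x (n + 1) - chebT x n

namespace Matrix

variable {R : Type*} [CommRing R]

theorem sq_fin_two_eq_trace_smul_sub_det_smul [Nontrivial R] (A : Matrix (Fin 2) (Fin 2) R) :
    A ^ 2 = A.trace • A - A.det • 1 := by
  have h := A.aeval_self_charpoly
  rw [charpoly_fin_two] at h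
  simp only [map_add, map_sub, map_pow, Polynomial.aeval_X, map_mul, Polynomial.aeval_C,
    Algebra.algebraMap_eq_smul_one, smul_mul_assoc, one_mul] at h
  rw [sub_eq_neg_add, ← sub_eq_zero, ← h]
  abel

theorem trace_pow_add_two_fin_two [Nontrivial R] (A : Matrix (Fin 2) (Fin 2) R) (n : ℕ) :
    (A ^ (n + 2)).trace = A.trace * (A ^ (n + 1)).trace - A.det * (A ^ n).trace := by
  rw [pow_add, sq_fin_two_eq_trace_smul_sub_det_smul, mul_sub, Matrix.mul_smul, Matrix.mul_smul,
    mul_one, ← pow_succ, trace_sub, trace_smul, trace_smul, smul_eq_mul, smul_eq_mul]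

theorem trace_pow_eq_chebT_trace {A : Matrix (Fin 2) (Fin 2) ℝ} (hA : A.det = 1) :
    ∀ n : ℕ, (A ^ n).trace = chebT A.trace n
  | 0 => by simp [chebT]
  | 1 => by simp [chebT]
  | n + 2 => by
    rw [trace_pow_add_two_fin_two, hA, trace_pow_eq_chebT_trace hA n,
      trace_pow_eq_chebT_trace hA (n + 1), one_mul, chebT]

end Matrix

/-- For `λ ∈ ℝ`, `x ≠ 0`, and `k ≥ 0`,
`tr(([[1,0],[λ/x,1]]·[[0,x],[-1/x,0]])^(k+1)) = T_{k+1}(λ)`. -/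
theorem trace_power_eq_chebT (lam x : ℝ) (hx : x ≠ 0) (k : ℕ) :
    ((!![(1 : ℝ), 0; lam / x, 1] * !![(0 : ℝ), x; -1 / x, 0]) ^ (k + 1)).trace =
      chebT lam (k + 1) := by
  have hM : !![(1 : ℝ), 0; lam / x, 1] * !![(0 : ℝ), x; -1 / x, 0] = !![0, x; -1 / x, lam] := by
    simp [hx]
  have hdet : (!![(0 : ℝ), x; -1 / x, lam]).det = 1 := by
    rw [Matrix.det_fin_two_of]
    field_simp
    ring
  rw [hM, Matrix.trace_pow_eq_chebT_trace hdet, Matrix.trace_fin_two_of, zero_add]
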